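/- Let A # ^Q V and A # ^{Q'} V be two coalgebra structures on A ⊕ V of type (c2) arising from extending data (ρ,γ,Q,Δ_V) and (ρ',γ',Q',Δ'_V), and let r: V→A, s: V→V be linear. Then the map φ(a,x) = (a + r(x), s(x)) is a coalgebra homomorphism restricting to the identity on A if and only if: ρ'(s(x)) = r(x₁)⊗s(x₂) + x₍[-1]₎⊗s(x₍[0]₎); γ'(s(x)) = s(x₁)⊗r(x₂) + s(x₍[0]₎)⊗x₍[1]₎; Δ'_V(s(x)) = (s⊗s)Δ_V(x); and Δ_A(r(x)) + Q'(s(x)) = r(x₁)⊗r(x₂) + x₍[-1]₎⊗r(x₍[0]₎) + r(x₍[0]₎)⊗x₍[1]₎ + Q(x). Moreover φ is an isomorphism if and only if s is a linear isomorphism. -/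
import Mathlib


open TensorProduct BigOperators

/-- The type (c2) unified coproduct on `A ⊕ V`. -/
noncomputable def unifiedComulC2 {k A V : Type*} [Field k]
    [AddCommGroup A] [Module k A] [AddCommGroup V] [Module k V]
    (dA : A →ₗ[k] A ⊗[k] A) (dV : V →ₗ[k] V ⊗[k] V)
    (ρ : V →ₗ[k] A ⊗[k] V) (γ : V →ₗ[k] V ⊗[k] A)
    (Q : V →ₗ[k] A ⊗[k] A) :
    (A × V) →ₗ[k] (A × V) ⊗[k] (A × V) :=
  (TensorProduct.map (LinearMap.inl k A V) (LinearMap.inl k A V)).comp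
      (dA.comp (LinearMap.fst k A V))
    + (TensorProduct.map (LinearMap.inr k A V) (LinearMap.inr k A V)).comp
      (dV.comp (LinearMap.snd k A V))
    + (TensorProduct.map (LinearMap.inl k A V) (LinearMap.inr k A V)).comp
      (ρ.comp (LinearMap.snd k A V))
    + (TensorProduct.map (LinearMap.inr k A V) (LinearMap.inl k A V)).comp
      (γ.comp (LinearMap.snd k A V))
    + (TensorProduct.map (LinearMap.inl k A V) (LinearMap.inl k A V)).comp
      (Q.comp (LinearMap.snd k A V))

/-- The linear map `φ(a,x) = (a + r(x), s(x))` on `A ⊕ V`. -/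
noncomputable def phiRS {k A V : Type*} [Field k]
    [AddCommGroup A] [Module k A] [AddCommGroup V] [Module k V]
    (r : V →ₗ[k] A) (s : V →ₗ[k] V) : (A × V) →ₗ[k] (A × V) :=
  (LinearMap.inl k A V).comp ((LinearMap.fst k A V) + r.comp (LinearMap.snd k A V))
    + (LinearMap.inr k A V).comp (s.comp (LinearMap.snd k A V))


section Aux
variable {k A V : Type*} [Field k]
    [AddCommGroup A] [Module k A] [AddCommGroup V] [Module k V]

lemma tmap_map {M N P Q M' N' : Type*} [AddCommGroup M] [Module k M] [AddCommGroup N] [Module k N]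
    [AddCommGroup P] [Module k P] [AddCommGroup Q] [Module k Q]
    [AddCommGroup M'] [Module k M'] [AddCommGroup N'] [Module k N']
    (f : M →ₗ[k] P) (g : N →ₗ[k] Q) (f' : P →ₗ[k] M') (g' : Q →ₗ[k] N') (t : M ⊗[k] N) :
    TensorProduct.map f' g' (TensorProduct.map f g t)
      = TensorProduct.map (f' ∘ₗ f) (g' ∘ₗ g) t := by
  rw [← LinearMap.comp_apply, ← TensorProduct.map_comp]

lemma phiRS_apply (r : V →ₗ[k] A) (s : V →ₗ[k] V) (a : A) (x : V) :
    phiRS r s (a, x) = (a + r x, s x) := by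
  simp [phiRS]

lemma phi_comp_inl (r : V →ₗ[k] A) (s : V →ₗ[k] V) :
    (phiRS r s) ∘ₗ LinearMap.inl k A V = LinearMap.inl k A V := by
  ext a <;> simp [phiRS]

lemma phi_comp_inr (r : V →ₗ[k] A) (s : V →ₗ[k] V) :
    (phiRS r s) ∘ₗ LinearMap.inr k A V
      = (LinearMap.inl k A V) ∘ₗ r + (LinearMap.inr k A V) ∘ₗ s := by
  ext x <;> simp [phiRS]

lemma comul_apply (dA : A →ₗ[k] A ⊗[k] A) (dV : V →ₗ[k] V ⊗[k] V)
    (ρ : V →ₗ[k] A ⊗[k] V) (γ : V →ₗ[k] V ⊗[k] A) (Q : V →ₗ[k] A ⊗[k] A) (a : A) (x : V) :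
    unifiedComulC2 dA dV ρ γ Q (a, x)
      = map (LinearMap.inl k A V) (LinearMap.inl k A V) (dA a + Q x)
        + map (LinearMap.inl k A V) (LinearMap.inr k A V) (ρ x)
        + map (LinearMap.inr k A V) (LinearMap.inl k A V) (γ x)
        + map (LinearMap.inr k A V) (LinearMap.inr k A V) (dV x) := by
  simp [unifiedComulC2]; abel

lemma coords_eq_iff (t11 u11 : A ⊗[k] A) (t12 u12 : A ⊗[k] V)
    (t21 u21 : V ⊗[k] A) (t22 u22 : V ⊗[k] V) :
    map (LinearMap.inl k A V) (LinearMap.inl k A V) t11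
      + map (LinearMap.inl k A V) (LinearMap.inr k A V) t12
      + map (LinearMap.inr k A V) (LinearMap.inl k A V) t21
      + map (LinearMap.inr k A V) (LinearMap.inr k A V) t22
    = map (LinearMap.inl k A V) (LinearMap.inl k A V) u11
      + map (LinearMap.inl k A V) (LinearMap.inr k A V) u12
      + map (LinearMap.inr k A V) (LinearMap.inl k A V) u21
      + map (LinearMap.inr k A V) (LinearMap.inr k A V) u22
      ↔ (t11 = u11 ∧ t12 = u12 ∧ t21 = u21 ∧ t22 = u22) := by
  constructor
  · intro h
    refine ⟨?_, ?_, ?_, ?_⟩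
    · have := congrArg (map (LinearMap.fst k A V) (LinearMap.fst k A V)) h
      simpa [tmap_map] using this
    · have := congrArg (map (LinearMap.fst k A V) (LinearMap.snd k A V)) h
      simpa [tmap_map] using this
    · have := congrArg (map (LinearMap.snd k A V) (LinearMap.fst k A V)) h
      simpa [tmap_map] using this
    · have := congrArg (map (LinearMap.snd k A V) (LinearMap.snd k A V)) h
      simpa [tmap_map] using this
  · rintro ⟨h1, h2, h3, h4⟩
    rw [h1, h2, h3, h4]

end Aux
section Aux2
variable {k A V : Type*} [Field k]
    [AddCommGroup A] [Module k A] [AddCommGroup V] [Module k V]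
    (r : V →ₗ[k] A) (s : V →ₗ[k] V)

lemma L1 (t : A ⊗[k] A) :
    map (phiRS r s) (phiRS r s) (map (LinearMap.inl k A V) (LinearMap.inl k A V) t)
      = map (LinearMap.inl k A V) (LinearMap.inl k A V) t := by
  induction t using TensorProduct.induction_on with
  | zero => simp
  | tmul a b => simp [phiRS_apply]
  | add u v hu hv => simp [map_add, hu, hv]

lemma L2 (t : A ⊗[k] V) :
    map (phiRS r s) (phiRS r s) (map (LinearMap.inl k A V) (LinearMap.inr k A V) t)
      = map (LinearMap.inl k A V) (LinearMap.inl k A V) ((LinearMap.lTensor A r) t)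
        + map (LinearMap.inl k A V) (LinearMap.inr k A V) ((LinearMap.lTensor A s) t) := by
  induction t using TensorProduct.induction_on with
  | zero => simp
  | tmul a x =>
      simp only [TensorProduct.map_tmul, phiRS_apply, LinearMap.lTensor_tmul,
        LinearMap.inl_apply, LinearMap.inr_apply, LinearMap.id_apply, zero_add, add_zero,
        map_zero]
      rw [show ((r x, s x) : A × V) = (r x, 0) + (0, s x) by simp]
      rw [tmul_add]
  | add u v hu hv => simp only [map_add, hu, hv]; abel

lemma L3 (t : V ⊗[k] A) :
    map (phiRS r s) (phiRS r s) (map (LinearMap.inr k A V) (LinearMap.inl k A V) t)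
      = map (LinearMap.inl k A V) (LinearMap.inl k A V) ((LinearMap.rTensor A r) t)
        + map (LinearMap.inr k A V) (LinearMap.inl k A V) ((LinearMap.rTensor A s) t) := by
  induction t using TensorProduct.induction_on with
  | zero => simp
  | tmul x a =>
      simp only [TensorProduct.map_tmul, phiRS_apply, LinearMap.rTensor_tmul,
        LinearMap.inl_apply, LinearMap.inr_apply, LinearMap.id_apply, zero_add, add_zero,
        map_zero]
      rw [show ((r x, s x) : A × V) = (r x, 0) + (0, s x) by simp]
      rw [add_tmul]
  | add u v hu hv => simp only [map_add, hu, hv]; abel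

lemma L4 (t : V ⊗[k] V) :
    map (phiRS r s) (phiRS r s) (map (LinearMap.inr k A V) (LinearMap.inr k A V) t)
      = map (LinearMap.inl k A V) (LinearMap.inl k A V) (map r r t)
        + map (LinearMap.inl k A V) (LinearMap.inr k A V) (map r s t)
        + map (LinearMap.inr k A V) (LinearMap.inl k A V) (map s r t)
        + map (LinearMap.inr k A V) (LinearMap.inr k A V) (map s s t) := by
  induction t using TensorProduct.induction_on with
  | zero => simp
  | tmul x y =>
      simp only [TensorProduct.map_tmul, phiRS_apply, LinearMap.inl_apply,
        LinearMap.inr_apply, zero_add, map_zero]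
      rw [show ((r x, s x) : A × V) = (r x, 0) + (0, s x) by simp,
          show ((r y, s y) : A × V) = (r y, 0) + (0, s y) by simp]
      rw [tmul_add, add_tmul, add_tmul]
      abel
  | add u v hu hv => simp only [map_add, hu, hv]; abel

end Aux2

/-- Characterization of the coalgebra homomorphisms `A # ^Q V → A # ^{Q'} V` of the
form `φ(a,x) = (a + r(x), s(x))` (those restricting to the identity on `A`), and:
`φ` is an isomorphism iff `s` is a linear isomorphism. -/
theorem stmt14 {k A V : Type*} [Field k]
    [AddCommGroup A] [Module k A] [AddCommGroup V] [Module k V]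
    (dA : A →ₗ[k] A ⊗[k] A)
    (dV dV' : V →ₗ[k] V ⊗[k] V)
    (ρ ρ' : V →ₗ[k] A ⊗[k] V) (γ γ' : V →ₗ[k] V ⊗[k] A)
    (Q Q' : V →ₗ[k] A ⊗[k] A)
    -- both unified coproducts are coassociative
    (hco : ∀ e : A × V,
      (TensorProduct.assoc k (A × V) (A × V) (A × V))
          ((LinearMap.rTensor (A × V) (unifiedComulC2 dA dV ρ γ Q))
            (unifiedComulC2 dA dV ρ γ Q e))
        = (LinearMap.lTensor (A × V) (unifiedComulC2 dA dV ρ γ Q))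
            (unifiedComulC2 dA dV ρ γ Q e))
    (hco' : ∀ e : A × V,
      (TensorProduct.assoc k (A × V) (A × V) (A × V))
          ((LinearMap.rTensor (A × V) (unifiedComulC2 dA dV' ρ' γ' Q'))
            (unifiedComulC2 dA dV' ρ' γ' Q' e))
        = (LinearMap.lTensor (A × V) (unifiedComulC2 dA dV' ρ' γ' Q'))
            (unifiedComulC2 dA dV' ρ' γ' Q' e))
    (r : V →ₗ[k] A) (s : V →ₗ[k] V) :
    -- φ is a coalgebra homomorphism iff the four compatibility conditions hold
    ((∀ w : A × V,
        (TensorProduct.map (phiRS r s) (phiRS r s)) (unifiedComulC2 dA dV ρ γ Q w)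
          = unifiedComulC2 dA dV' ρ' γ' Q' (phiRS r s w))
      ↔ ((∀ x : V, ρ' (s x) = (TensorProduct.map r s) (dV x) + (LinearMap.lTensor A s) (ρ x))
        ∧ (∀ x : V, γ' (s x) = (TensorProduct.map s r) (dV x) + (LinearMap.rTensor A s) (γ x))
        ∧ (∀ x : V, dV' (s x) = (TensorProduct.map s s) (dV x))
        ∧ (∀ x : V, dA (r x) + Q' (s x)
            = (TensorProduct.map r r) (dV x) + (LinearMap.lTensor A r) (ρ x)
              + (LinearMap.rTensor A r) (γ x) + Q x)))
    -- φ is an isomorphism iff s is a linear isomorphism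
    ∧ (Function.Bijective (phiRS r s) ↔ Function.Bijective s) := by
  have hLHS : ∀ x : V,
      map (phiRS r s) (phiRS r s) (unifiedComulC2 dA dV ρ γ Q ((0 : A), x))
        = map (LinearMap.inl k A V) (LinearMap.inl k A V)
            ((TensorProduct.map r r) (dV x) + (LinearMap.lTensor A r) (ρ x)
              + (LinearMap.rTensor A r) (γ x) + Q x)
          + map (LinearMap.inl k A V) (LinearMap.inr k A V)
            ((TensorProduct.map r s) (dV x) + (LinearMap.lTensor A s) (ρ x))
          + map (LinearMap.inr k A V) (LinearMap.inl k A V)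
            ((TensorProduct.map s r) (dV x) + (LinearMap.rTensor A s) (γ x))
          + map (LinearMap.inr k A V) (LinearMap.inr k A V) ((TensorProduct.map s s) (dV x)) := by
    intro x
    rw [comul_apply]
    simp only [map_zero, zero_add, map_add, L1, L2, L3, L4]
    abel
  have hRHS : ∀ x : V,
      unifiedComulC2 dA dV' ρ' γ' Q' (phiRS r s ((0 : A), x))
        = map (LinearMap.inl k A V) (LinearMap.inl k A V) (dA (r x) + Q' (s x))
          + map (LinearMap.inl k A V) (LinearMap.inr k A V) (ρ' (s x))
          + map (LinearMap.inr k A V) (LinearMap.inl k A V) (γ' (s x))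
          + map (LinearMap.inr k A V) (LinearMap.inr k A V) (dV' (s x)) := by
    intro x
    rw [phiRS_apply, zero_add, comul_apply]
  have iffx : ∀ x : V,
      (map (phiRS r s) (phiRS r s) (unifiedComulC2 dA dV ρ γ Q ((0 : A), x))
        = unifiedComulC2 dA dV' ρ' γ' Q' (phiRS r s ((0 : A), x)))
      ↔ ((ρ' (s x) = (TensorProduct.map r s) (dV x) + (LinearMap.lTensor A s) (ρ x))
        ∧ (γ' (s x) = (TensorProduct.map s r) (dV x) + (LinearMap.rTensor A s) (γ x))
        ∧ (dV' (s x) = (TensorProduct.map s s) (dV x))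
        ∧ (dA (r x) + Q' (s x)
            = (TensorProduct.map r r) (dV x) + (LinearMap.lTensor A r) (ρ x)
              + (LinearMap.rTensor A r) (γ x) + Q x)) := by
    intro x
    rw [hLHS, hRHS, coords_eq_iff]
    exact ⟨fun ⟨a, b, c, d⟩ => ⟨b.symm, c.symm, d.symm, a.symm⟩,
      fun ⟨a, b, c, d⟩ => ⟨d.symm, a.symm, b.symm, c.symm⟩⟩
  constructor
  · constructor
    · intro h
      exact ⟨fun x => ((iffx x).mp (h (0, x))).1, fun x => ((iffx x).mp (h (0, x))).2.1,
        fun x => ((iffx x).mp (h (0, x))).2.2.1, fun x => ((iffx x).mp (h (0, x))).2.2.2⟩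
    · rintro ⟨h1, h2, h3, h4⟩ ⟨a, x⟩
      have hx := (iffx x).mpr ⟨h1 x, h2 x, h3 x, h4 x⟩
      have base : map (phiRS r s) (phiRS r s) (unifiedComulC2 dA dV ρ γ Q (a, (0 : V)))
          = unifiedComulC2 dA dV' ρ' γ' Q' (phiRS r s (a, (0 : V))) := by
        rw [comul_apply, phiRS_apply, comul_apply]
        simp [L1]
      have split : ((a, x) : A × V) = (a, 0) + (0, x) := by simp
      rw [split, map_add, map_add, map_add, base, hx]
      exact (map_add _ _ _).symm
  · constructor
    · intro hφ
      constructor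
      · intro x y hxy
        have h2 : phiRS r s (-(r x), x) = phiRS r s (-(r y), y) := by
          rw [phiRS_apply, phiRS_apply, hxy]
          simp
        have := hφ.1 h2
        exact (Prod.ext_iff.mp this).2
      · intro y
        obtain ⟨⟨a, x⟩, hx⟩ := hφ.2 (0, y)
        rw [phiRS_apply] at hx
        exact ⟨x, (Prod.ext_iff.mp hx).2⟩
    · intro hs
      constructor
      · rintro ⟨a, x⟩ ⟨b, y⟩ h
        rw [phiRS_apply, phiRS_apply, Prod.mk.injEq] at h
        obtain ⟨hab, hxy⟩ := h
        have hxy' := hs.1 hxy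
        subst hxy'
        have : a = b := by
          have := add_right_cancel hab
          exact this
        rw [this]
      · rintro ⟨b, y⟩
        obtain ⟨x, hx⟩ := hs.2 y
        exact ⟨(b - r x, x), by rw [phiRS_apply, hx]; simp⟩
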